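/- arXiv:2412.17916 — 4 statements merged into one kernel-verified Lean document; each statement's English description precedes it below -/
import Mathlib

section
/- For every μ ∈ 𝒫(𝒳) and every proper, lower semicontinuous, convex g : ℝ^m → ℝ∪{+∞} satisfying Assumption A, the primal objective x ↦ α g(Cx) + κ_μ(x) attains its infimum over ℝ^d; that is, argmin_{x∈ℝ^d} (α g(Cx) + κ_μ(x)) is nonempty. -/
open MeasureTheory Filter Topology Metric ProbabilityTheory
open scoped RealInnerProductSpace Pointwise

noncomputable section

abbrev Euc (k : ℕ) : Type := EuclideanSpace ℝ (Fin k)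

/-- Moment generating function of a measure on `Euc k`. -/
def Mgf {k : ℕ} (μ : Measure (Euc k)) (y : Euc k) : ℝ :=
  ∫ x, Real.exp ⟪y, x⟫ ∂μ

/-- Log-moment generating function. -/
def Lmgf {k : ℕ} (μ : Measure (Euc k)) (y : Euc k) : ℝ :=
  Real.log (Mgf μ y)

/-- MEM function: Fenchel conjugate of the log-moment generating function. -/
def Kappa {k : ℕ} (μ : Measure (Euc k)) (x : Euc k) : EReal :=
  ⨆ y : Euc k, ((⟪y, x⟫ - Lmgf μ y : ℝ) : EReal)

/-- Fenchel conjugate of an extended-real-valued function. -/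
def EConj {k : ℕ} (g : Euc k → EReal) (w : Euc k) : EReal :=
  ⨆ z : Euc k, (((⟪z, w⟫ : ℝ) : EReal) - g z)

/-- Properness for extended-real-valued functions. -/
def EProper {k : ℕ} (g : Euc k → EReal) : Prop :=
  (∀ z, g z ≠ ⊥) ∧ (∃ z, g z ≠ ⊤)

/-- Convexity for extended-real-valued functions. -/
def EConvex {k : ℕ} (g : Euc k → EReal) : Prop :=
  ∀ x y : Euc k, ∀ a b : ℝ, 0 ≤ a → 0 ≤ b → a + b = 1 →
    g (a • x + b • y) ≤ (a : EReal) * g x + (b : EReal) * g y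

/-- Epigraphical convergence of a sequence of extended-real-valued functions. -/
def EpiConverges {F : Type*} [TopologicalSpace F] (f : ℕ → F → EReal) (g : F → EReal) : Prop :=
  (∀ z : F, ∀ zs : ℕ → F, Tendsto zs atTop (𝓝 z) →
      g z ≤ Filter.liminf (fun n => f n (zs n)) atTop) ∧
  (∀ z : F, ∃ zs : ℕ → F, Tendsto zs atTop (𝓝 z) ∧
      Filter.limsup (fun n => f n (zs n)) atTop ≤ g z)

variable {d m : ℕ}

/-- Primal MEM objective `x ↦ α g(Cx) + κ_μ(x)`. -/
def PrimalObj (α : ℝ) (g : Euc m → EReal) (C : Euc d →L[ℝ] Euc m)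
    (μ : Measure (Euc d)) (x : Euc d) : EReal :=
  (α : EReal) * g (C x) + Kappa μ x

/-- Dual MEM objective `z ↦ α g*(-z/α) + L_μ(Cᵀ z)` for general fidelity. -/
def DualObj (α : ℝ) (g : Euc m → EReal) (C : Euc d →L[ℝ] Euc m)
    (μ : Measure (Euc d)) (z : Euc m) : EReal :=
  (α : EReal) * EConj g (-(α⁻¹ • z)) +
    ((Lmgf μ (ContinuousLinearMap.adjoint C z) : ℝ) : EReal)

/-- Dual MEM objective with quadratic fidelity. -/
def QDual (α : ℝ) (b : Euc m) (C : Euc d →L[ℝ] Euc m)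
    (μ : Measure (Euc d)) (z : Euc m) : ℝ :=
  ‖z‖ ^ 2 / (2 * α) - ⟪b, z⟫ + Lmgf μ (ContinuousLinearMap.adjoint C z)

/-- Empirical moment generating function from samples. -/
def EmpMgf {Ω : Type*} (X : ℕ → Ω → Euc d) (n : ℕ) (ω : Ω) (y : Euc d) : ℝ :=
  (n : ℝ)⁻¹ * ∑ i ∈ Finset.range n, Real.exp ⟪y, X i ω⟫

/-- Empirical log-moment generating function. -/
def EmpLmgf {Ω : Type*} (X : ℕ → Ω → Euc d) (n : ℕ) (ω : Ω) (y : Euc d) : ℝ :=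
  Real.log (EmpMgf X n ω y)

/-- Empirical dual objective, general fidelity. -/
def DualObjEmp {Ω : Type*} (α : ℝ) (g : Euc m → EReal) (C : Euc d →L[ℝ] Euc m)
    (X : ℕ → Ω → Euc d) (n : ℕ) (ω : Ω) (z : Euc m) : EReal :=
  (α : EReal) * EConj g (-(α⁻¹ • z)) +
    ((EmpLmgf X n ω (ContinuousLinearMap.adjoint C z) : ℝ) : EReal)

/-- Empirical dual objective with quadratic fidelity. -/
def QDualEmp {Ω : Type*} (α : ℝ) (b : Euc m) (C : Euc d →L[ℝ] Euc m)
    (X : ℕ → Ω → Euc d) (n : ℕ) (ω : Ω) (z : Euc m) : ℝ :=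
  ‖z‖ ^ 2 / (2 * α) - ⟪b, z⟫ + EmpLmgf X n ω (ContinuousLinearMap.adjoint C z)

/-- `|𝒳| = max_{x ∈ 𝒳} ‖x‖`. -/
def XBound (Xs : Set (Euc d)) : ℝ := sSup ((fun x => ‖x‖) '' Xs)

/-- The constant `ρ̂`. -/
def rhoHat (α : ℝ) (b : Euc m) (C : Euc d →L[ℝ] Euc m) (Xs : Set (Euc d)) : ℝ :=
  2 * α * (‖b‖ + ‖C‖ * XBound Xs)

/-- The constant `ρ₀`. -/
def rho0 (α : ℝ) (b : Euc m) (C : Euc d →L[ℝ] Euc m) (Xs : Set (Euc d)) : ℝ :=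
  max (rhoHat α b C Xs)
    ((rhoHat α b C Xs) ^ 2 / (2 * α) + ‖b‖ * rhoHat α b C Xs +
      rhoHat α b C Xs * ‖C‖ * XBound Xs)

/-- `D_ρ(ν,μ) = max_{z ∈ B_ρ} |L_μ(Cᵀz) − L_ν(Cᵀz)|`. -/
def Drho (ρ : ℝ) (C : Euc d →L[ℝ] Euc m) (ν μ : Measure (Euc d)) : ℝ :=
  sSup ((fun z => |Lmgf μ (ContinuousLinearMap.adjoint C z) -
      Lmgf ν (ContinuousLinearMap.adjoint C z)|) '' Metric.closedBall (0 : Euc m) ρ)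

/-- Smallest singular value of `C`. -/
def sigmaMin (C : Euc d →L[ℝ] Euc m) : ℝ :=
  ⨅ x : Metric.sphere (0 : Euc d) 1, ‖C x.val‖

/-- The set of `ε`-minimizers of the quadratic-fidelity dual objective. -/
def SEps (α : ℝ) (b : Euc m) (C : Euc d →L[ℝ] Euc m) (ν : Measure (Euc d)) (ε : ℝ) :
    Set (Euc m) :=
  {z | ∀ w, QDual α b C ν z ≤ QDual α b C ν w + ε}

/-!
Outside any closed convex set `K` carrying `μ`, the MEM function is `+∞`: if `⟪y, ·⟫ < u` on `K`
while `⟪y, x⟫ > u`, then `L_μ(t y) ≤ t u` and `κ_μ(x) ≥ t (⟪y, x⟫ - u) → ∞`. Taking for `K` the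
closed convex hull of the compact set `𝒳`, the primal objective is a lower semicontinuous function
which is `+∞` off a compact set, so it attains its minimum on that set.
-/

section LowerSemicontinuous

variable {α : Type*} [TopologicalSpace α]

theorem LowerSemicontinuousOn.exists_forall_le_of_eq_top_of_notMem {β : Type*} [LinearOrder β]
    [OrderTop β] {f : α → β} {K : Set α} (hK : IsCompact K) (hKne : K.Nonempty)
    (hf : LowerSemicontinuousOn f K) (htop : ∀ x ∉ K, f x = ⊤) :
    ∃ a, ∀ x, f a ≤ f x := by
  obtain ⟨a, -, hmin⟩ := hf.exists_isMinOn hKne hK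
  refine ⟨a, fun x => ?_⟩
  by_cases hx : x ∈ K
  · exact hmin hx
  · exact htop x hx ▸ le_top

theorem LowerSemicontinuous.coe_mul_ereal {f : α → EReal} (hf : LowerSemicontinuous f)
    {c : ℝ} (hc : 0 ≤ c) : LowerSemicontinuous fun x => (c : EReal) * f x :=
  have hcont : Continuous fun t : EReal => (c : EReal) * t :=
    continuous_iff_continuousAt.2 fun _ =>
      EReal.Tendsto.const_mul tendsto_id (Or.inl (EReal.coe_ne_bot c))
        (Or.inl (EReal.coe_ne_top c))
  hcont.comp_lowerSemicontinuous hf fun _ _ h =>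
    mul_le_mul_of_nonneg_left h (EReal.coe_nonneg.2 hc)

theorem LowerSemicontinuous.add_ereal {f g : α → EReal} (hf : LowerSemicontinuous f)
    (hg : LowerSemicontinuous g) (hf_bot : ∀ x, f x ≠ ⊥) (hg_bot : ∀ x, g x ≠ ⊥) :
    LowerSemicontinuous fun x => f x + g x :=
  hf.add' hg fun x => EReal.continuousAt_add (Or.inr (hg_bot x)) (Or.inl (hf_bot x))

end LowerSemicontinuous

theorem EReal.coe_mul_ne_bot {c : ℝ} (hc : 0 ≤ c) {t : EReal} (ht : t ≠ ⊥) :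
    (c : EReal) * t ≠ ⊥ :=
  (EReal.mul_ne_bot _ _).2
    ⟨Or.inl (EReal.coe_ne_bot c), Or.inr ht, Or.inl (EReal.coe_ne_top c),
      Or.inl (EReal.coe_nonneg.2 hc)⟩

section Kappa

variable {k : ℕ} {μ : Measure (Euc k)}

theorem lmgf_le_of_ae_inner_le [IsProbabilityMeasure μ] {y : Euc k} {u : ℝ}
    (hu : ∀ᵐ x ∂μ, ⟪y, x⟫ ≤ u) : Lmgf μ y ≤ u := by
  have hexp : ∀ᵐ x ∂μ, Real.exp ⟪y, x⟫ ≤ Real.exp u := hu.mono fun _ => Real.exp_le_exp.2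
  have hint : Integrable (fun x => Real.exp ⟪y, x⟫) μ :=
    (integrable_const (Real.exp u)).mono'
      (Real.continuous_exp.comp (continuous_const.inner continuous_id)).aestronglyMeasurable
      (hexp.mono fun _ hx => by rwa [Real.norm_of_nonneg (Real.exp_pos _).le])
  rw [Lmgf, Mgf, Real.log_le_iff_le_exp (integral_exp_pos hint)]
  simpa using integral_mono_ae hint (integrable_const (Real.exp u)) hexp

theorem le_kappa (x y : Euc k) : ((⟪y, x⟫ - Lmgf μ y : ℝ) : EReal) ≤ Kappa μ x :=
  le_iSup (fun y => ((⟪y, x⟫ - Lmgf μ y : ℝ) : EReal)) y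

theorem kappa_nonneg [IsProbabilityMeasure μ] (x : Euc k) : 0 ≤ Kappa μ x := by
  simpa [Lmgf, Mgf] using le_kappa (μ := μ) x 0

theorem lowerSemicontinuous_kappa : LowerSemicontinuous (Kappa μ) :=
  lowerSemicontinuous_iSup fun _ =>
    (continuous_coe_real_ereal.comp
      ((continuous_const.inner continuous_id).sub continuous_const)).lowerSemicontinuous

theorem kappa_eq_top_of_notMem [IsProbabilityMeasure μ] {K : Set (Euc k)} (hKconv : Convex ℝ K)
    (hKclosed : IsClosed K) (hμK : ∀ᵐ p ∂μ, p ∈ K) {x : Euc k} (hx : x ∉ K) :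
    Kappa μ x = ⊤ := by
  obtain ⟨f, u, hfK, hfx⟩ := geometric_hahn_banach_closed_point hKconv hKclosed hx
  set y := (InnerProductSpace.toDual ℝ (Euc k)).symm f
  have hy : ∀ p, ⟪y, p⟫ = f p := fun _ => InnerProductSpace.toDual_symm_apply
  refine (EReal.eq_top_iff_forall_lt _).2 fun r => ?_
  obtain ⟨n, hn⟩ := exists_nat_gt (r / (f x - u))
  have hLmgf : Lmgf μ ((n : ℝ) • y) ≤ n * u :=
    lmgf_le_of_ae_inner_le <| hμK.mono fun p hp => by
      rw [real_inner_smul_left, hy]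
      exact mul_le_mul_of_nonneg_left (hfK p hp).le n.cast_nonneg
  calc (r : EReal) < ((⟪(n : ℝ) • y, x⟫ - Lmgf μ ((n : ℝ) • y) : ℝ) : EReal) := by
        rw [EReal.coe_lt_coe_iff, real_inner_smul_left, hy]
        rw [div_lt_iff₀ (sub_pos.2 hfx)] at hn
        linarith
    _ ≤ Kappa μ x := le_kappa x _

end Kappa

section PrimalObj

variable {α : ℝ} {g : Euc m → EReal} {C : Euc d →L[ℝ] Euc m} {μ : Measure (Euc d)}

theorem lowerSemicontinuous_primalObj [IsProbabilityMeasure μ] (hα : 0 ≤ α)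
    (hg : LowerSemicontinuous g) (hg_bot : ∀ z, g z ≠ ⊥) :
    LowerSemicontinuous (PrimalObj α g C μ) :=
  ((hg.comp C.continuous).coe_mul_ereal hα).add_ereal lowerSemicontinuous_kappa
    (fun _ => EReal.coe_mul_ne_bot hα (hg_bot _))
    (fun x => ((EReal.bot_lt_zero).trans_le (kappa_nonneg x)).ne')

theorem primalObj_eq_top_of_kappa_eq_top (hα : 0 ≤ α) (hg_bot : ∀ z, g z ≠ ⊥) {x : Euc d}
    (hx : Kappa μ x = ⊤) : PrimalObj α g C μ x = ⊤ := by
  rw [PrimalObj, hx, EReal.add_top_of_ne_bot (EReal.coe_mul_ne_bot hα (hg_bot _))]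

end PrimalObj

theorem mem_primal_solution_exists_general
    (d m : ℕ)
    (Xs : Set (Euc d)) (hXc : IsCompact Xs) (hXne : Xs.Nonempty)
    (μ : Measure (Euc d)) (hμP : IsProbabilityMeasure μ) (hμX : ∀ᵐ x ∂μ, x ∈ Xs)
    (C : Euc d →L[ℝ] Euc m) (α : ℝ) (hα : 0 < α)
    (g : Euc m → EReal) (hgp : EProper g) (hglsc : LowerSemicontinuous g) :
    ∃ xbar : Euc d, ∀ x : Euc d, PrimalObj α g C μ xbar ≤ PrimalObj α g C μ x := by
  set K := closure (convexHull ℝ Xs)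
  have hXK : Xs ⊆ K := (subset_convexHull ℝ Xs).trans subset_closure
  have hK : IsCompact K := Metric.isCompact_of_isClosed_isBounded isClosed_closure
    (isBounded_convexHull.2 hXc.isBounded).closure
  exact (lowerSemicontinuous_primalObj hα.le hglsc hgp.1).lowerSemicontinuousOn K
    |>.exists_forall_le_of_eq_top_of_notMem hK (hXne.mono hXK) fun x hx =>
      primalObj_eq_top_of_kappa_eq_top hα.le hgp.1 <|
        kappa_eq_top_of_notMem (convex_convexHull ℝ Xs).closure isClosed_closure
          (hμX.mono fun _ hp => hXK hp) hx

/-- existence of a primal solution. -/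
theorem mem_primal_solution_exists
    (d m : ℕ) (hd : 0 < d) (hm : 0 < m)
    (Xs : Set (Euc d)) (hXc : IsCompact Xs) (hXne : Xs.Nonempty)
    (μ : Measure (Euc d)) (hμP : IsProbabilityMeasure μ) (hμX : ∀ᵐ x ∂μ, x ∈ Xs)
    (C : Euc d →L[ℝ] Euc m) (α : ℝ) (hα : 0 < α)
    (g : Euc m → EReal) (hgp : EProper g) (hglsc : LowerSemicontinuous g) (hgc : EConvex g)
    (hA : (0 : Euc m) ∈ interior ({z | g z ≠ ⊤} - (⇑C '' {x | Kappa μ x ≠ ⊤}))) :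
    ∃ xbar : Euc d, ∀ x : Euc d, PrimalObj α g C μ xbar ≤ PrimalObj α g C μ x :=
  mem_primal_solution_exists_general d m Xs hXc hXne μ hμP hμX C α hα g hgp hglsc
end
end

section
/- Let μ ∈ 𝒫(𝒳), let g : ℝ^m → ℝ∪{+∞} be proper, lower semicontinuous and convex, and suppose Assumption A holds. Then for any z̄ ∈ argmin_{z∈ℝ^m} φ_μ(z), the point x̄ := ∇L_μ(Cᵀz̄) is the unique minimizer over ℝ^d of x ↦ α g(Cx) + κ_μ(x); in particular ∇L_μ(Cᵀz̄) is the same for every dual minimizer z̄. -/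
open MeasureTheory Filter Topology Metric ProbabilityTheory
open scoped RealInnerProductSpace Pointwise

noncomputable section

variable {d m : ℕ}

/-!
Weak duality: the Fenchel–Young inequalities `g (C x) ≥ ⟪C x, v⟫ - g* v` and
`κ_μ x ≥ ⟪y, x⟫ - L_μ y`, at `v = -z/α` and `y = Cᵀ z`, add up to `P x ≥ -D z` for the primal
objective `P` and the dual objective `D`.

At a dual minimizer `z̄`, differentiating `D` along segments (on which `g*` is convex and `L_μ` is
smooth) gives `g* v ≥ g* v̄ + ⟪C x̄, v - v̄⟫` for all `v`, where `v̄ = -z̄/α` and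
`x̄ = ∇L_μ (Cᵀ z̄)`. Since `g = g**` (separate the closed convex epigraph from a point below it),
this makes the first Fenchel–Young inequality an equality at `C x̄`; the second one is an equality
at `x̄` because `L_μ` is convex with gradient `x̄` at `y`. Hence `P x̄ = -D z̄`.

Any primal minimizer `x` also attains `-D z̄`, so the second Fenchel–Young inequality is an
equality at `x`: `y` minimizes `L_μ - ⟪·, x⟫`, whence `x = ∇L_μ y`.
-/

section Gradient
variable {F : Type*} [NormedAddCommGroup F] [InnerProductSpace ℝ F] [CompleteSpace F]
  {f : F → ℝ} {x y : F}

lemma DifferentiableAt.hasLineDerivAt_inner_gradient (hf : DifferentiableAt ℝ f y) (v : F) :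
    HasLineDerivAt ℝ f ⟪gradient f y, v⟫ y v := by
  simpa using hf.hasGradientAt.hasFDerivAt.hasLineDerivAt v

lemma ConvexOn.add_inner_gradient_le (hf : ConvexOn ℝ Set.univ f) (hd : DifferentiableAt ℝ f y)
    (w : F) : f y + ⟪gradient f y, w - y⟫ ≤ f w := by
  have hφ : ConvexOn ℝ Set.univ (fun t : ℝ => f (y + t • (w - y))) := by
    simpa [Function.comp_def, AffineMap.lineMap_apply, add_comm] using
      hf.comp_affineMap (AffineMap.lineMap y w)
  have := hφ.le_slope_of_hasDerivAt (Set.mem_univ 0) (Set.mem_univ 1) zero_lt_one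
    (hd.hasLineDerivAt_inner_gradient (w - y))
  rw [slope_def_field] at this
  simp only [zero_smul, add_zero, one_smul, add_sub_cancel, sub_zero, div_one] at this
  linarith

lemma eq_gradient_of_forall_add_inner_le (hd : DifferentiableAt ℝ f y)
    (h : ∀ w, f y + ⟪x, w - y⟫ ≤ f w) : x = gradient f y := by
  have hmin : IsLocalMin (fun w => f w - ⟪x, w⟫) y :=
    Filter.Eventually.of_forall fun w => by have := h w; rw [inner_sub_right] at this; linarith
  have hderiv := (hd.hasLineDerivAt_inner_gradient (gradient f y - x)).sub
    ((innerSL ℝ x).hasFDerivAt (x := y) |>.hasLineDerivAt (gradient f y - x))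
  have h0 := hmin.hasLineDerivAt_eq_zero hderiv
  rw [innerSL_apply_apply, ← inner_sub_left, real_inner_self_eq_norm_sq] at h0
  exact (sub_eq_zero.1 (norm_eq_zero.1 (pow_eq_zero_iff two_ne_zero |>.1 h0))).symm

end Gradient

section Lmgf

variable {μ : Measure (Euc d)} {R : ℝ}

lemma exp_inner_le_of_norm_le {x : Euc d} (hx : ‖x‖ ≤ R) (y : Euc d) :
    Real.exp ⟪y, x⟫ ≤ Real.exp (‖y‖ * R) :=
  Real.exp_le_exp.2 <|
    (real_inner_le_norm y x).trans (mul_le_mul_of_nonneg_left hx (norm_nonneg y))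

lemma memLp_exp_inner [IsFiniteMeasure μ] (hR : ∀ᵐ x ∂μ, ‖x‖ ≤ R) (y : Euc d) (p : ENNReal) :
    MemLp (fun x => Real.exp ⟪y, x⟫) p μ :=
  MemLp.of_bound (by fun_prop : Continuous fun x : Euc d => Real.exp ⟪y, x⟫).aestronglyMeasurable
    _ <| hR.mono fun x hx => by
      rw [Real.norm_of_nonneg (Real.exp_pos _).le]
      exact exp_inner_le_of_norm_le hx y

lemma integrable_exp_inner [IsFiniteMeasure μ] (hR : ∀ᵐ x ∂μ, ‖x‖ ≤ R) (y : Euc d) :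
    Integrable (fun x => Real.exp ⟪y, x⟫) μ :=
  memLp_one_iff_integrable.1 (memLp_exp_inner hR y 1)

lemma mgf_pos [IsProbabilityMeasure μ] (hR : ∀ᵐ x ∂μ, ‖x‖ ≤ R) (y : Euc d) : 0 < Mgf μ y :=
  integral_exp_pos (integrable_exp_inner hR y)

lemma mgf_smul_add_smul_le [IsFiniteMeasure μ] (hR : ∀ᵐ x ∂μ, ‖x‖ ≤ R) {a b : ℝ}
    (ha : 0 < a) (hb : 0 < b) (hab : a + b = 1) (y₁ y₂ : Euc d) :
    Mgf μ (a • y₁ + b • y₂) ≤ Mgf μ y₁ ^ a * Mgf μ y₂ ^ b := by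
  have hpow : ∀ (c : ℝ) (y x : Euc d), 0 < c →
      Real.exp ⟪c • y, x⟫ ^ c⁻¹ = Real.exp ⟪y, x⟫ := fun c y x hc => by
    rw [← Real.exp_mul, real_inner_smul_left, mul_comm, ← mul_assoc, inv_mul_cancel₀ hc.ne',
      one_mul]
  have holder := integral_mul_le_Lp_mul_Lq_of_nonneg (μ := μ)
    (Real.HolderConjugate.inv_inv ha hb hab)
    (Eventually.of_forall fun x => (Real.exp_pos ⟪a • y₁, x⟫).le)
    (Eventually.of_forall fun x => (Real.exp_pos ⟪b • y₂, x⟫).le)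
    (memLp_exp_inner hR _ _) (memLp_exp_inner hR _ _)
  simp only [one_div, inv_inv, ← Real.exp_add, ← inner_add_left, hpow a _ _ ha,
    hpow b _ _ hb] at holder
  exact holder

lemma convexOn_lmgf [IsProbabilityMeasure μ] (hR : ∀ᵐ x ∂μ, ‖x‖ ≤ R) :
    ConvexOn ℝ Set.univ (Lmgf μ) := by
  refine ⟨convex_univ, fun y₁ _ y₂ _ a b ha hb hab => ?_⟩
  rcases ha.eq_or_lt with rfl | ha
  · simp_all
  rcases hb.eq_or_lt with rfl | hb
  · simp_all
  have h₁ := mgf_pos hR y₁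
  have h₂ := mgf_pos hR y₂
  calc Lmgf μ (a • y₁ + b • y₂)
      ≤ Real.log (Mgf μ y₁ ^ a * Mgf μ y₂ ^ b) :=
        Real.log_le_log (mgf_pos hR _) (mgf_smul_add_smul_le hR ha hb hab y₁ y₂)
    _ = a • Lmgf μ y₁ + b • Lmgf μ y₂ := by
        rw [Real.log_mul (Real.rpow_pos_of_pos h₁ _).ne' (Real.rpow_pos_of_pos h₂ _).ne',
          Real.log_rpow h₁, Real.log_rpow h₂, smul_eq_mul, smul_eq_mul, Lmgf, Lmgf]

lemma hasFDerivAt_mgf [IsFiniteMeasure μ] (hR : ∀ᵐ x ∂μ, ‖x‖ ≤ R) (y₀ : Euc d) :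
    HasFDerivAt (Mgf μ) (∫ x, Real.exp ⟪y₀, x⟫ • innerSL ℝ x ∂μ) y₀ := by
  have hbound : ∀ᵐ x ∂μ, ∀ y ∈ ball y₀ 1,
      ‖Real.exp ⟪y, x⟫ • innerSL ℝ x‖ ≤ Real.exp ((‖y₀‖ + 1) * R) * R := by
    filter_upwards [hR] with x hx y hy
    have hy' : ‖y‖ ≤ ‖y₀‖ + 1 := by
      have := norm_le_norm_add_norm_sub' y y₀
      rw [mem_ball, dist_eq_norm] at hy
      linarith
    rw [norm_smul, innerSL_apply_norm, Real.norm_of_nonneg (Real.exp_pos _).le]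
    refine mul_le_mul ((exp_inner_le_of_norm_le hx y).trans (Real.exp_le_exp.2 ?_)) hx
      (norm_nonneg x) (Real.exp_pos _).le
    exact mul_le_mul_of_nonneg_right hy' ((norm_nonneg x).trans hx)
  have hderiv : ∀ x y : Euc d, HasFDerivAt (fun y => Real.exp ⟪y, x⟫)
      (Real.exp ⟪y, x⟫ • innerSL ℝ x) y := fun x y => by
    simpa only [Function.comp_def, innerSL_apply_apply, real_inner_comm x] using
      (Real.hasDerivAt_exp _).comp_hasFDerivAt y (innerSL ℝ x).hasFDerivAt
  exact hasFDerivAt_integral_of_dominated_of_fderiv_le (ball_mem_nhds y₀ one_pos)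
    (Eventually.of_forall fun y => (integrable_exp_inner hR y).aestronglyMeasurable)
    (integrable_exp_inner hR y₀) (by fun_prop : Continuous _).aestronglyMeasurable hbound
    (integrable_const _) (Eventually.of_forall fun x y _ => hderiv x y)

lemma differentiableAt_lmgf [IsProbabilityMeasure μ] (hR : ∀ᵐ x ∂μ, ‖x‖ ≤ R) (y : Euc d) :
    DifferentiableAt ℝ (Lmgf μ) y :=
  (hasFDerivAt_mgf hR y).differentiableAt.log (mgf_pos hR y).ne'

end Lmgf

section AffineMinorant

variable {E : Type*} [NormedAddCommGroup E] {g : E → EReal}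

lemma LowerSemicontinuous.isClosed_real_epigraph (hg : LowerSemicontinuous g) :
    IsClosed {p : E × ℝ | g p.1 ≤ p.2} :=
  hg.isClosed_epigraph.preimage
    (continuous_fst.prodMk (continuous_coe_real_ereal.comp continuous_snd))

variable [NormedSpace ℝ E]

lemma exists_separating_of_lt (hconv : Convex ℝ {p : E × ℝ | g p.1 ≤ p.2})
    (hg : LowerSemicontinuous g) {x₀ : E} {r : ℝ} (hr : (r : EReal) < g x₀) :
    ∃ (ℓ : StrongDual ℝ E) (s u : ℝ),
      ℓ x₀ + s * r < u ∧ ∀ z (t : ℝ), g z ≤ t → u < ℓ z + s * t := by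
  obtain ⟨f, u, hfx, hf⟩ := geometric_hahn_banach_point_closed hconv hg.isClosed_real_epigraph
    (show (x₀, r) ∉ {p : E × ℝ | g p.1 ≤ p.2} from not_le.2 hr)
  have hsplit : ∀ z (t : ℝ), f (z, t) = f.comp (.inl ℝ E ℝ) z + f (0, 1) * t := fun z t => by
    rw [mul_comm, ← smul_eq_mul, ← f.map_smul, ContinuousLinearMap.comp_apply,
      ContinuousLinearMap.inl_apply, ← map_add, Prod.smul_mk, smul_zero, smul_eq_mul, mul_one,
      Prod.mk_add_mk, add_zero, zero_add]
  exact ⟨f.comp (.inl ℝ E ℝ), f (0, 1), u, hsplit x₀ r ▸ hfx,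
    fun z t hzt => hsplit z t ▸ hf (z, t) hzt⟩

variable {ℓ : StrongDual ℝ E} {s u : ℝ}

lemma nonneg_of_separates (hsep : ∀ z (t : ℝ), g z ≤ t → u < ℓ z + s * t) {z : E}
    (hz : g z ≠ ⊤) : 0 ≤ s := by
  by_contra! hs
  obtain ⟨t₀, ht₀⟩ : ∃ t₀ : ℝ, g z ≤ t₀ := ⟨_, (EReal.le_coe_toReal hz)⟩
  have := hsep z (max t₀ ((u - ℓ z) / s)) (ht₀.trans (EReal.coe_le_coe_iff.2 (le_max_left _ _)))
  have := mul_le_mul_of_nonpos_left (le_max_right t₀ ((u - ℓ z) / s)) hs.le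
  rw [mul_div_cancel₀ _ hs.ne] at this
  linarith

lemma coe_le_of_separates (hs : 0 < s) (hsep : ∀ z (t : ℝ), g z ≤ t → u < ℓ z + s * t)
    (z : E) : (((-s⁻¹ • ℓ) z + u / s : ℝ) : EReal) ≤ g z := by
  by_contra! h
  have := hsep z _ h.le
  simp only [FunLike.coe_smul, Pi.smul_apply, smul_eq_mul] at this
  field_simp at this
  linarith

lemma exists_affine_le (hconv : Convex ℝ {p : E × ℝ | g p.1 ≤ p.2})
    (hg : LowerSemicontinuous g) {z₀ : E} {r₀ : ℝ} (hz₀ : g z₀ = r₀) :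
    ∃ (ℓ : StrongDual ℝ E) (c : ℝ), ∀ z, ((ℓ z + c : ℝ) : EReal) ≤ g z := by
  obtain ⟨ℓ, s, u, hx₀, hsep⟩ := exists_separating_of_lt hconv hg
    (x₀ := z₀) (r := r₀ - 1) (by rw [hz₀]; exact EReal.coe_lt_coe_iff.2 (by linarith))
  have hs : 0 < s := by
    have := hsep z₀ r₀ hz₀.le
    nlinarith
  exact ⟨_, _, coe_le_of_separates hs hsep⟩

lemma exists_affine_le_of_lt (hconv : Convex ℝ {p : E × ℝ | g p.1 ≤ p.2})
    (hg : LowerSemicontinuous g) {z₀ : E} {r₀ : ℝ} (hz₀ : g z₀ = r₀) {x₀ : E} {r : ℝ}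
    (hr : (r : EReal) < g x₀) :
    ∃ (ℓ : StrongDual ℝ E) (c : ℝ), (∀ z, ((ℓ z + c : ℝ) : EReal) ≤ g z) ∧ r < ℓ x₀ + c := by
  obtain ⟨ℓ, s, u, hx₀, hsep⟩ := exists_separating_of_lt hconv hg hr
  rcases (nonneg_of_separates hsep (z := z₀) (by simp [hz₀])).eq_or_lt with rfl | hs
  · -- a vertical hyperplane: tilt an arbitrary affine minorant by a large multiple of `u - ℓ`
    obtain ⟨ℓ₀, c₀, h₀⟩ := exists_affine_le hconv hg hz₀
    simp only [zero_mul, add_zero] at hx₀ hsep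
    have hpos : 0 < u - ℓ x₀ := by linarith
    obtain ⟨lam, hlam₀, hlam⟩ : ∃ lam : ℝ, 0 ≤ lam ∧ r + 1 - (ℓ₀ x₀ + c₀) ≤ lam * (u - ℓ x₀) :=
      ⟨_, le_max_left 0 _, (div_le_iff₀ hpos).1 (le_max_right _ _)⟩
    refine ⟨ℓ₀ - lam • ℓ, c₀ + lam * u, fun z => ?_, ?_⟩ <;>
      simp only [FunLike.coe_sub, FunLike.coe_smul, Pi.sub_apply, Pi.smul_apply, smul_eq_mul]
    · rcases eq_or_ne (g z) ⊤ with hz | hz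
      · simp [hz]
      refine le_trans (EReal.coe_le_coe_iff.2 ?_) (h₀ z)
      nlinarith [hsep z _ (EReal.le_coe_toReal hz)]
    · linarith
  · refine ⟨-s⁻¹ • ℓ, u / s, coe_le_of_separates hs hsep, ?_⟩
    simp only [FunLike.coe_smul, Pi.smul_apply, smul_eq_mul]
    rw [← sub_pos]
    field_simp
    linarith

end AffineMinorant

lemma EReal.le_of_coe_le_of_add_le_add {a b : EReal} {a' b' : ℝ} (ha : (a' : EReal) ≤ a)
    (h : a + b ≤ a' + b') : b ≤ b' := by
  induction a using EReal.rec <;> induction b using EReal.rec <;> simp_all [← EReal.coe_add]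
  linarith

section FenchelConjugate

variable {k : ℕ} {g : Euc k → EReal}

lemma EConvex.convex_epigraph (hgc : EConvex g) : Convex ℝ {p : Euc k × ℝ | g p.1 ≤ p.2} := by
  rintro ⟨z₁, t₁⟩ h₁ ⟨z₂, t₂⟩ h₂ a b ha hb hab
  calc g (a • z₁ + b • z₂) ≤ a * g z₁ + b * g z₂ := hgc z₁ z₂ a b ha hb hab
    _ ≤ a * t₁ + b * t₂ := add_le_add (mul_le_mul_of_nonneg_left h₁ (mod_cast ha))
        (mul_le_mul_of_nonneg_left h₂ (mod_cast hb))
    _ = ((a * t₁ + b * t₂ : ℝ) : EReal) := by norm_cast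

lemma coe_inner_sub_le_econj (g : Euc k → EReal) (z v : Euc k) :
    ((⟪z, v⟫ : ℝ) : EReal) - g z ≤ EConj g v :=
  le_iSup (fun z => ((⟪z, v⟫ : ℝ) : EReal) - g z) z

lemma coe_inner_sub_le_of_econj_eq {v : Euc k} {c : ℝ} (hc : EConj g v = c) (z : Euc k) :
    ((⟪z, v⟫ - c : ℝ) : EReal) ≤ g z := by
  have := hc ▸ coe_inner_sub_le_econj g z v
  induction h : g z using EReal.rec <;> simp_all
  norm_cast at *
  linarith

lemma econj_ne_bot (hgp : EProper g) (v : Euc k) : EConj g v ≠ ⊥ := by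
  obtain ⟨z, hz⟩ := hgp.2
  refine ne_bot_of_le_ne_bot ?_ (coe_inner_sub_le_econj g z v)
  rw [← EReal.coe_toReal hz (hgp.1 z)]
  exact EReal.coe_ne_bot _

lemma econj_le_of_inner_add_le {v : Euc k} {c : ℝ} (h : ∀ z, ((⟪v, z⟫ + c : ℝ) : EReal) ≤ g z) :
    EConj g v ≤ ((-c : ℝ) : EReal) :=
  iSup_le fun z => (EReal.sub_le_sub le_rfl (h z)).trans_eq <| by
    rw [← EReal.coe_sub, real_inner_comm]
    ring_nf

lemma econj_add_smul_sub_le {v₁ v₂ : Euc k} {c₁ c₂ t : ℝ} (ht₀ : 0 ≤ t) (ht₁ : t ≤ 1)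
    (h₁ : EConj g v₁ = c₁) (h₂ : EConj g v₂ = c₂) :
    EConj g (v₁ + t • (v₂ - v₁)) ≤ (((1 - t) * c₁ + t * c₂ : ℝ) : EReal) := by
  refine iSup_le fun z => ?_
  have hz₁ := coe_inner_sub_le_of_econj_eq h₁ z
  have hz₂ := coe_inner_sub_le_of_econj_eq h₂ z
  induction h : g z using EReal.rec with
  | bot => exact absurd (le_bot_iff.1 (h ▸ hz₁)) (EReal.coe_ne_bot _)
  | top => simp
  | coe r =>
    rw [h, EReal.coe_le_coe_iff] at hz₁ hz₂
    rw [← EReal.coe_sub, EReal.coe_le_coe_iff, inner_add_right, inner_smul_right,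
      inner_sub_right]
    nlinarith

lemma exists_inner_add_le_of_lt (hgp : EProper g) (hglsc : LowerSemicontinuous g)
    (hgc : EConvex g) {x₀ : Euc k} {r : ℝ} (hr : (r : EReal) < g x₀) :
    ∃ (v : Euc k) (c : ℝ), (∀ z, ((⟪v, z⟫ + c : ℝ) : EReal) ≤ g z) ∧ r < ⟪v, x₀⟫ + c := by
  obtain ⟨z₀, hz₀⟩ := hgp.2
  obtain ⟨ℓ, c, hℓ, hlt⟩ := exists_affine_le_of_lt hgc.convex_epigraph hglsc
    (EReal.coe_toReal hz₀ (hgp.1 z₀)).symm hr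
  refine ⟨(InnerProductSpace.toDual ℝ (Euc k)).symm ℓ, c, fun z => ?_, ?_⟩
  · simpa only [InnerProductSpace.toDual_symm_apply] using hℓ z
  · simpa only [InnerProductSpace.toDual_symm_apply] using hlt

lemma exists_econj_ne_top (hgp : EProper g) (hglsc : LowerSemicontinuous g) (hgc : EConvex g) :
    ∃ v, EConj g v ≠ ⊤ := by
  obtain ⟨z₀, hz₀⟩ := hgp.2
  obtain ⟨v, c, hvc, -⟩ := exists_inner_add_le_of_lt hgp hglsc hgc (x₀ := z₀)
    (r := (g z₀).toReal - 1)
    (by rw [← EReal.coe_toReal hz₀ (hgp.1 z₀)]; exact EReal.coe_lt_coe_iff.2 (by simp))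
  exact ⟨v, ne_top_of_le_ne_top (EReal.coe_ne_top _) (econj_le_of_inner_add_le hvc)⟩

/-- `g ≤ g**` in disguise: `g x` is approximated from below by affine minorants. -/
lemma le_inner_sub_of_forall_le_econj (hgp : EProper g) (hglsc : LowerSemicontinuous g)
    (hgc : EConvex g) {x vb : Euc k} {c : ℝ}
    (hsub : ∀ v (cv : ℝ), EConj g v = cv → c + ⟪x, v - vb⟫ ≤ cv) :
    g x ≤ ((⟪x, vb⟫ - c : ℝ) : EReal) := by
  by_contra! hlt
  obtain ⟨v, c', hvc', hlt'⟩ := exists_inner_add_le_of_lt hgp hglsc hgc hlt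
  have hle := econj_le_of_inner_add_le hvc'
  obtain ⟨cv, hcv⟩ : ∃ cv : ℝ, EConj g v = cv :=
    ⟨_, (EReal.coe_toReal (ne_top_of_le_ne_top (EReal.coe_ne_top _) hle)
      (econj_ne_bot hgp v)).symm⟩
  have := hsub v cv hcv
  have := EReal.coe_le_coe_iff.1 (hcv ▸ hle)
  rw [inner_sub_right, real_inner_comm x v] at *
  linarith

end FenchelConjugate

section Duality

open ContinuousLinearMap (adjoint adjoint_inner_left adjoint_inner_right)

variable {μ : Measure (Euc d)} {R : ℝ}

lemma coe_inner_sub_lmgf_le_kappa (μ : Measure (Euc d)) (x y : Euc d) :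
    ((⟪y, x⟫ - Lmgf μ y : ℝ) : EReal) ≤ Kappa μ x :=
  le_iSup (fun y => ((⟪y, x⟫ - Lmgf μ y : ℝ) : EReal)) y

lemma kappa_gradient_lmgf [IsProbabilityMeasure μ] (hR : ∀ᵐ x ∂μ, ‖x‖ ≤ R) (y : Euc d) :
    Kappa μ (gradient (Lmgf μ) y) = ((⟪y, gradient (Lmgf μ) y⟫ - Lmgf μ y : ℝ) : EReal) := by
  refine le_antisymm (iSup_le fun w => EReal.coe_le_coe_iff.2 ?_)
    (coe_inner_sub_lmgf_le_kappa μ _ y)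
  have := (convexOn_lmgf hR).add_inner_gradient_le (differentiableAt_lmgf hR y) w
  rw [inner_sub_right, real_inner_comm w, real_inner_comm y] at this
  linarith

lemma eq_gradient_lmgf_of_kappa_le [IsProbabilityMeasure μ] (hR : ∀ᵐ x ∂μ, ‖x‖ ≤ R)
    {x y : Euc d} (h : Kappa μ x ≤ ((⟪y, x⟫ - Lmgf μ y : ℝ) : EReal)) :
    x = gradient (Lmgf μ) y := by
  refine eq_gradient_of_forall_add_inner_le (differentiableAt_lmgf hR y) fun w => ?_
  have := EReal.coe_le_coe_iff.1 ((coe_inner_sub_lmgf_le_kappa μ x w).trans h)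
  rw [inner_sub_right, real_inner_comm w, real_inner_comm y]
  linarith

variable {α : ℝ} {g : Euc m → EReal} {C : Euc d →L[ℝ] Euc m}

lemma coe_neg_dual_eq (hα : α ≠ 0) (μ : Measure (Euc d)) (c : ℝ) (x : Euc d) (z : Euc m) :
    ((-(α * c + Lmgf μ (adjoint C z)) : ℝ) : EReal) =
      (α : EReal) * ((⟪C x, -(α⁻¹ • z)⟫ - c : ℝ) : EReal) +
        ((⟪adjoint C z, x⟫ - Lmgf μ (adjoint C z) : ℝ) : EReal) := by
  rw [← EReal.coe_mul, ← EReal.coe_add, EReal.coe_eq_coe_iff, inner_neg_right,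
    real_inner_smul_right, adjoint_inner_left, real_inner_comm]
  field_simp
  ring

lemma neg_dual_le_primalObj (hα : 0 < α) {z : Euc m} {c : ℝ}
    (hc : EConj g (-(α⁻¹ • z)) = c) (x : Euc d) :
    ((-(α * c + Lmgf μ (adjoint C z)) : ℝ) : EReal) ≤ PrimalObj α g C μ x :=
  (coe_neg_dual_eq hα.ne' μ c x z).trans_le <|
    add_le_add (mul_le_mul_of_nonneg_left (coe_inner_sub_le_of_econj_eq hc _) (mod_cast hα.le))
      (coe_inner_sub_lmgf_le_kappa μ x _)

lemma kappa_le_of_primalObj_le (hα : 0 < α) {z : Euc m} {c : ℝ}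
    (hc : EConj g (-(α⁻¹ • z)) = c) {x : Euc d}
    (hx : PrimalObj α g C μ x ≤ ((-(α * c + Lmgf μ (adjoint C z)) : ℝ) : EReal)) :
    Kappa μ x ≤ ((⟪adjoint C z, x⟫ - Lmgf μ (adjoint C z) : ℝ) : EReal) := by
  rw [coe_neg_dual_eq hα.ne' μ c x z, ← EReal.coe_mul] at hx
  refine EReal.le_of_coe_le_of_add_le_add ?_ hx
  rw [EReal.coe_mul]
  exact mul_le_mul_of_nonneg_left (coe_inner_sub_le_of_econj_eq hc _) (mod_cast hα.le)

lemma econj_ne_top_of_forall_dualObj_le (hα : 0 < α) (hgp : EProper g)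
    (hglsc : LowerSemicontinuous g) (hgc : EConvex g) {zbar : Euc m}
    (hmin : ∀ w, DualObj α g C μ zbar ≤ DualObj α g C μ w) : EConj g (-(α⁻¹ • zbar)) ≠ ⊤ := by
  obtain ⟨v, hv⟩ := exists_econj_ne_top hgp hglsc hgc
  have hfin : DualObj α g C μ (-(α • v)) ≠ ⊤ := by
    rw [DualObj, smul_neg, neg_neg, smul_smul, inv_mul_cancel₀ hα.ne', one_smul,
      ← EReal.coe_toReal hv (econj_ne_bot hgp v), ← EReal.coe_mul, ← EReal.coe_add]
    exact EReal.coe_ne_top _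
  intro htop
  refine hfin (top_le_iff.1 ((le_of_eq ?_).trans (hmin _)))
  rw [DualObj, htop, EReal.coe_mul_top_of_pos hα, EReal.top_add_coe]

lemma le_econj_of_forall_dualObj_le (hα : 0 < α) {zbar : Euc m}
    (hL : DifferentiableAt ℝ (Lmgf μ) (adjoint C zbar))
    (hmin : ∀ w, DualObj α g C μ zbar ≤ DualObj α g C μ w) {c : ℝ}
    (hc : EConj g (-(α⁻¹ • zbar)) = c) {v : Euc m} {cv : ℝ} (hv : EConj g v = cv) :
    c + ⟪C (gradient (Lmgf μ) (adjoint C zbar)), v - -(α⁻¹ • zbar)⟫ ≤ cv := by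
  set y := adjoint C zbar
  set vb := -(α⁻¹ • zbar)
  set u := -(α • adjoint C (v - vb))
  -- move the dual variable along the segment on which `-(α⁻¹ • z)` runs from `vb` to `v`
  have hpath : ∀ t : ℝ, -(α⁻¹ • (zbar - (t * α) • (v - vb))) = vb + t • (v - vb) := fun t => by
    rw [smul_sub, smul_smul, mul_left_comm, inv_mul_cancel₀ hα.ne', mul_one]
    module
  have hpath_adjoint : ∀ t : ℝ, adjoint C (zbar - (t * α) • (v - vb)) = y + t • u := fun t => by
    rw [map_sub, map_smul]
    module
  let φ : ℝ → ℝ := fun t => α * ((1 - t) * c + t * cv) + Lmgf μ (y + t • u)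
  have hφmin : IsMinOn φ (Set.Icc 0 1) 0 := fun t ht => by
    have h := hmin (zbar - (t * α) • (v - vb))
    rw [DualObj, DualObj, hpath, hpath_adjoint, hc] at h
    have hle := add_le_add (mul_le_mul_of_nonneg_left (econj_add_smul_sub_le ht.1 ht.2 hc hv)
      (mod_cast hα.le : (0 : EReal) ≤ α)) (le_refl ((Lmgf μ (y + t • u) : ℝ) : EReal))
    have := EReal.coe_le_coe_iff.1 <| by
      simpa only [← EReal.coe_mul, ← EReal.coe_add] using h.trans hle
    show φ 0 ≤ φ t
    simp only [φ, zero_smul, add_zero, sub_zero, one_mul, zero_mul]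
    linarith
  have hφ : HasDerivAt φ (α * (cv - c) + ⟪gradient (Lmgf μ) y, u⟫) 0 := by
    have := ((((hasDerivAt_id (0 : ℝ)).const_sub 1).mul_const c).add
      ((hasDerivAt_id (0 : ℝ)).mul_const cv)).const_mul α |>.add
      (hL.hasLineDerivAt_inner_gradient u)
    exact this.congr_deriv (by ring)
  have := hφmin.localize.hasFDerivWithinAt_nonneg hφ.hasFDerivAt.hasFDerivWithinAt
    (y := 1) (mem_posTangentConeAt_of_segment_subset (by simp [segment_eq_Icc]))
  simp only [ContinuousLinearMap.toSpanSingleton_apply, one_smul] at this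
  rw [inner_neg_right, real_inner_smul_right, adjoint_inner_right] at this
  nlinarith

lemma primalObj_gradient_lmgf_le [IsProbabilityMeasure μ] (hR : ∀ᵐ x ∂μ, ‖x‖ ≤ R) (hα : 0 < α)
    (hgp : EProper g) (hglsc : LowerSemicontinuous g) (hgc : EConvex g) {zbar : Euc m}
    (hmin : ∀ w, DualObj α g C μ zbar ≤ DualObj α g C μ w) {c : ℝ}
    (hc : EConj g (-(α⁻¹ • zbar)) = c) :
    PrimalObj α g C μ (gradient (Lmgf μ) (adjoint C zbar)) ≤
      ((-(α * c + Lmgf μ (adjoint C zbar)) : ℝ) : EReal) := by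
  have hsub := le_inner_sub_of_forall_le_econj hgp hglsc hgc fun v cv hv =>
    le_econj_of_forall_dualObj_le hα (differentiableAt_lmgf hR _) hmin hc hv
  rw [PrimalObj, kappa_gradient_lmgf hR, coe_neg_dual_eq hα.ne' μ c _ zbar]
  exact add_le_add (mul_le_mul_of_nonneg_left hsub (mod_cast hα.le)) le_rfl

end Duality

theorem mem_primal_dual_recovery_general
    (d m : ℕ)
    (Xs : Set (Euc d)) (hXc : IsCompact Xs)
    (μ : Measure (Euc d)) (hμP : IsProbabilityMeasure μ) (hμX : ∀ᵐ x ∂μ, x ∈ Xs)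
    (C : Euc d →L[ℝ] Euc m) (α : ℝ) (hα : 0 < α)
    (g : Euc m → EReal) (hgp : EProper g) (hglsc : LowerSemicontinuous g) (hgc : EConvex g) :
    ∀ zbar : Euc m, (∀ w, DualObj α g C μ zbar ≤ DualObj α g C μ w) →
      ((∀ x : Euc d,
          PrimalObj α g C μ (gradient (Lmgf μ) (ContinuousLinearMap.adjoint C zbar)) ≤
            PrimalObj α g C μ x) ∧
        (∀ x : Euc d, (∀ x', PrimalObj α g C μ x ≤ PrimalObj α g C μ x') →
          x = gradient (Lmgf μ) (ContinuousLinearMap.adjoint C zbar))) := by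
  intro zbar hmin
  obtain ⟨R, hR⟩ := hXc.isBounded.exists_norm_le
  replace hR : ∀ᵐ x ∂μ, ‖x‖ ≤ R := hμX.mono hR
  obtain ⟨c, hc⟩ : ∃ c : ℝ, EConj g (-(α⁻¹ • zbar)) = c :=
    ⟨_, (EReal.coe_toReal (econj_ne_top_of_forall_dualObj_le hα hgp hglsc hgc hmin)
      (econj_ne_bot hgp _)).symm⟩
  have hopt := primalObj_gradient_lmgf_le hR hα hgp hglsc hgc hmin hc
  exact ⟨fun x => hopt.trans (neg_dual_le_primalObj hα hc x), fun x hx =>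
    eq_gradient_lmgf_of_kappa_le hR (kappa_le_of_primalObj_le hα hc ((hx _).trans hopt))⟩

/-- primal-dual recovery. -/
theorem mem_primal_dual_recovery
    (d m : ℕ) (hd : 0 < d) (hm : 0 < m)
    (Xs : Set (Euc d)) (hXc : IsCompact Xs) (hXne : Xs.Nonempty)
    (μ : Measure (Euc d)) (hμP : IsProbabilityMeasure μ) (hμX : ∀ᵐ x ∂μ, x ∈ Xs)
    (C : Euc d →L[ℝ] Euc m) (α : ℝ) (hα : 0 < α)
    (g : Euc m → EReal) (hgp : EProper g) (hglsc : LowerSemicontinuous g) (hgc : EConvex g)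
    (hA : (0 : Euc m) ∈ interior ({z | g z ≠ ⊤} - (⇑C '' {x | Kappa μ x ≠ ⊤}))) :
    ∀ zbar : Euc m, (∀ w, DualObj α g C μ zbar ≤ DualObj α g C μ w) →
      ((∀ x : Euc d,
          PrimalObj α g C μ (gradient (Lmgf μ) (ContinuousLinearMap.adjoint C zbar)) ≤
            PrimalObj α g C μ x) ∧
        (∀ x : Euc d, (∀ x', PrimalObj α g C μ x ≤ PrimalObj α g C μ x') →
          x = gradient (Lmgf μ) (ContinuousLinearMap.adjoint C zbar))) :=
  mem_primal_dual_recovery_general d m Xs hXc μ hμP hμX C α hα g hgp hglsc hgc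
end
end

section
/- ℙ-almost surely, the empirical moment generating functions composed with Cᵀ epi-converge to that of μ: ℙ({ω ∈ Ω : the sequence of functions z ↦ M_n(Cᵀz, ω) epi-converges to z ↦ M_μ(Cᵀz)}) = 1. -/
open MeasureTheory Filter Topology Metric ProbabilityTheory
open scoped RealInnerProductSpace Pointwise

noncomputable section

variable {d m : ℕ}

/-! Almost surely the strong law of large numbers gives `M_n(y) → M_μ(y)` at every point `y` of a
countable dense set. As the samples stay in a bounded set, the functions `M_n(·, ω)` are locally
uniformly Lipschitz, hence equicontinuous, so the convergence spreads to every point and becomes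
continuous convergence: `M_n(y_n) → M_μ(y)` whenever `y_n → y`. Continuous convergence survives
composition with `Cᵀ` and, for real-valued functions, implies epi-convergence. -/

theorem Real.abs_exp_sub_exp_le {a b c : ℝ} (ha : a ≤ c) (hb : b ≤ c) :
    |Real.exp a - Real.exp b| ≤ Real.exp c * |a - b| := by
  simpa only [Real.norm_eq_abs] using
    (convex_Iic c).norm_image_sub_le_of_norm_deriv_le (f := Real.exp)
      (fun x _ => Real.differentiableAt_exp)
      (fun x hx => by simpa using Real.exp_le_exp.2 hx) hb ha

theorem abs_exp_inner_sub_exp_inner_le {E : Type*} [NormedAddCommGroup E]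
    [InnerProductSpace ℝ E] {x y y' : E} {B S : ℝ}
    (hx : ‖x‖ ≤ B) (hy : ‖y‖ ≤ S) (hy' : ‖y'‖ ≤ S) :
    |Real.exp ⟪y, x⟫ - Real.exp ⟪y', x⟫| ≤ Real.exp (S * B) * B * ‖y - y'‖ := by
  have hS : 0 ≤ S := (norm_nonneg y).trans hy
  have inner_le : ∀ z : E, ‖z‖ ≤ S → ⟪z, x⟫ ≤ S * B := fun z hz =>
    (real_inner_le_norm z x).trans (mul_le_mul hz hx (norm_nonneg x) hS)
  calc |Real.exp ⟪y, x⟫ - Real.exp ⟪y', x⟫|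
      ≤ Real.exp (S * B) * |⟪y - y', x⟫| := by
        rw [inner_sub_left]
        exact Real.abs_exp_sub_exp_le (inner_le y hy) (inner_le y' hy')
    _ ≤ Real.exp (S * B) * (B * ‖y - y'‖) := by
        gcongr
        exact (abs_real_inner_le_norm _ _).trans_eq (mul_comm _ _) |>.trans
          (mul_le_mul_of_nonneg_right hx (norm_nonneg _))
    _ = Real.exp (S * B) * B * ‖y - y'‖ := by ring

theorem integrable_exp_inner_s3 {k : ℕ} {ν : Measure (Euc k)} [IsFiniteMeasure ν] {B : ℝ}
    (hν : ∀ᵐ x ∂ν, ‖x‖ ≤ B) (y : Euc k) :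
    Integrable (fun x => Real.exp ⟪y, x⟫) ν := by
  refine Integrable.of_bound (by fun_prop) (Real.exp (‖y‖ * B)) ?_
  filter_upwards [hν] with x hx
  rw [Real.norm_of_nonneg (Real.exp_pos _).le]
  exact Real.exp_le_exp.2 ((real_inner_le_norm y x).trans
    (mul_le_mul_of_nonneg_left hx (norm_nonneg y)))

theorem abs_mgf_sub_mgf_le {k : ℕ} {ν : Measure (Euc k)} [IsFiniteMeasure ν] (hν : ν Set.univ ≤ 1)
    {B S : ℝ} (hB : 0 ≤ B) (hνB : ∀ᵐ x ∂ν, ‖x‖ ≤ B) {y y' : Euc k}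
    (hy : ‖y‖ ≤ S) (hy' : ‖y'‖ ≤ S) :
    |Mgf ν y - Mgf ν y'| ≤ Real.exp (S * B) * B * ‖y - y'‖ := by
  have hbound := norm_integral_le_of_norm_le_const (μ := ν)
    (f := fun x => Real.exp ⟪y, x⟫ - Real.exp ⟪y', x⟫) (C := Real.exp (S * B) * B * ‖y - y'‖)
    (by filter_upwards [hνB] with x hx using abs_exp_inner_sub_exp_inner_le hx hy hy')
  have hmass : ν.real Set.univ ≤ 1 := ENNReal.toReal_le_of_le_ofReal zero_le_one (by simpa using hν)
  rw [Mgf, Mgf, ← integral_sub (integrable_exp_inner_s3 hνB y) (integrable_exp_inner_s3 hνB y')]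
  exact hbound.trans (mul_le_of_le_one_right (by positivity) hmass)

theorem equicontinuous_mgf {ι : Type*} {k : ℕ} {ν : ι → Measure (Euc k)}
    [∀ i, IsFiniteMeasure (ν i)] (hν : ∀ i, ν i Set.univ ≤ 1) {B : ℝ} (hB : 0 ≤ B)
    (hνB : ∀ i, ∀ᵐ x ∂ν i, ‖x‖ ≤ B) :
    Equicontinuous fun i => Mgf (ν i) := by
  intro y₀
  set S := ‖y₀‖ + 1
  refine Metric.equicontinuousAt_of_continuity_modulus
    (fun y => Real.exp (S * B) * B * ‖y₀ - y‖) ?_ _ ?_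
  · simpa using ((by fun_prop : Continuous fun y : Euc k => Real.exp (S * B) * B * ‖y₀ - y‖)
      |>.tendsto y₀)
  · filter_upwards [Metric.closedBall_mem_nhds y₀ one_pos] with y hy i
    have hyS : ‖y‖ ≤ S := by
      have := norm_le_norm_add_norm_sub' y y₀
      rw [mem_closedBall_iff_norm] at hy
      linarith
    exact abs_mgf_sub_mgf_le (hν i) hB (hνB i) (by linarith) hyS

open scoped ENNReal in
def empiricalMeasure {α Ω : Type*} [MeasurableSpace α] (X : ℕ → Ω → α) (n : ℕ) (ω : Ω) :
    Measure α :=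
  (n : ℝ≥0∞)⁻¹ • ∑ i ∈ Finset.range n, Measure.dirac (X i ω)

section empiricalMeasure

variable {α Ω : Type*} [MeasurableSpace α] (X : ℕ → Ω → α) (n : ℕ) (ω : Ω)

theorem empiricalMeasure_univ_le_one : empiricalMeasure X n ω Set.univ ≤ 1 := by
  simp [empiricalMeasure, ENNReal.inv_mul_le_one]

instance : IsFiniteMeasure (empiricalMeasure X n ω) :=
  ⟨(empiricalMeasure_univ_le_one X n ω).trans_lt ENNReal.one_lt_top⟩

theorem ae_empiricalMeasure [MeasurableSingletonClass α] {p : α → Prop}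
    (hp : ∀ i, p (X i ω)) : ∀ᵐ x ∂empiricalMeasure X n ω, p x := by
  refine Measure.ae_smul_measure (ae_finsetSum_measure_iff.2 fun i _ => ?_) _
  rw [ae_dirac_eq]
  exact hp i

end empiricalMeasure

theorem empMgf_eq_mgf_empiricalMeasure {Ω : Type*} (X : ℕ → Ω → Euc d) (n : ℕ) (ω : Ω) :
    EmpMgf X n ω = Mgf (empiricalMeasure X n ω) := by
  ext y
  rw [EmpMgf, Mgf, empiricalMeasure, integral_smul_measure,
    integral_finsetSum_measure fun i _ => integrable_dirac enorm_lt_top]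
  simp

theorem EquicontinuousAt.tendsto_apply_of_tendsto {ι X α : Type*} [TopologicalSpace X]
    [PseudoMetricSpace α] {F : ι → X → α} {l : Filter ι} {x : X} {a : α} {xs : ι → X}
    (hF : EquicontinuousAt F x) (hx : Tendsto (F · x) l (𝓝 a)) (hxs : Tendsto xs l (𝓝 x)) :
    Tendsto (fun i => F i (xs i)) l (𝓝 a) := by
  rw [Metric.equicontinuousAt_iff_right] at hF
  rw [Metric.tendsto_nhds] at hx ⊢
  intro ε hε
  filter_upwards [hxs.eventually (hF (ε / 2) (half_pos hε)), hx (ε / 2) (half_pos hε)]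
    with i hnear hconv
  calc dist (F i (xs i)) a ≤ dist (F i x) (F i (xs i)) + dist (F i x) a := dist_triangle_left ..
    _ < ε := by linarith [hnear i]

theorem ae_tendsto_empMgf {Ω : Type*} [MeasurableSpace Ω] {P : Measure Ω}
    {μ : Measure (Euc d)} [IsFiniteMeasure μ] {X : ℕ → Ω → Euc d}
    (hXmeas : ∀ i, Measurable (X i)) (hlaw : ∀ i, Measure.map (X i) P = μ)
    (hindep : iIndepFun X P)
    {B : ℝ} (hμB : ∀ᵐ x ∂μ, ‖x‖ ≤ B) (y : Euc d) :
    ∀ᵐ ω ∂P, Tendsto (fun n => EmpMgf X n ω y) atTop (𝓝 (Mgf μ y)) := by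
  set f : Euc d → ℝ := fun x => Real.exp ⟪y, x⟫
  have hf : Measurable f := by fun_prop
  have hint : Integrable (f ∘ X 0) P := by
    rw [← integrable_map_measure (by fun_prop) (hXmeas 0).aemeasurable, hlaw 0]
    exact integrable_exp_inner_s3 hμB y
  have hident : ∀ i, IdentDistrib (f ∘ X i) (f ∘ X 0) P P := fun i =>
    IdentDistrib.comp ⟨(hXmeas i).aemeasurable, (hXmeas 0).aemeasurable, by rw [hlaw, hlaw]⟩ hf
  have hmean : P[f ∘ X 0] = Mgf μ y := by
    rw [← hlaw 0, Mgf, integral_map (hXmeas 0).aemeasurable (by fun_prop)]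
    rfl
  filter_upwards [strong_law_ae_real (fun i => f ∘ X i) hint
    (fun i j hij => (hindep.indepFun hij).comp hf hf) hident] with ω hω
  rw [hmean] at hω
  simpa only [EmpMgf, div_eq_inv_mul, Function.comp_apply, f] using hω

theorem ae_tendsto_empMgf_of_tendsto {Ω : Type*} [MeasurableSpace Ω] {P : Measure Ω}
    {μ : Measure (Euc d)} [IsProbabilityMeasure μ] {X : ℕ → Ω → Euc d}
    (hXmeas : ∀ i, Measurable (X i)) (hlaw : ∀ i, Measure.map (X i) P = μ)
    (hindep : iIndepFun X P) {B : ℝ} (hB : 0 ≤ B) (hX : ∀ i ω, ‖X i ω‖ ≤ B)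
    (hμB : ∀ᵐ x ∂μ, ‖x‖ ≤ B) :
    ∀ᵐ ω ∂P, ∀ (y : Euc d) (ys : ℕ → Euc d), Tendsto ys atTop (𝓝 y) →
      Tendsto (fun n => EmpMgf X n ω (ys n)) atTop (𝓝 (Mgf μ y)) := by
  obtain ⟨u, hu⟩ := TopologicalSpace.exists_dense_seq (Euc d)
  filter_upwards [ae_all_iff.2 fun k => ae_tendsto_empMgf hXmeas hlaw hindep hμB (u k)]
    with ω hω
  have hequi : Equicontinuous fun n => EmpMgf X n ω := by
    simp only [empMgf_eq_mgf_empiricalMeasure]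
    exact equicontinuous_mgf (empiricalMeasure_univ_le_one X · ω) hB
      fun n => ae_empiricalMeasure X n ω (hX · ω)
  have hcont : Continuous (Mgf μ) :=
    (equicontinuous_mgf (ν := fun _ : Unit => μ) (fun _ => prob_le_one) hB
      fun _ => hμB).continuous ()
  have hpointwise : ∀ y, Tendsto (fun n => EmpMgf X n ω y) atTop (𝓝 (Mgf μ y)) := by
    intro y
    have hclosed := hequi.isClosed_setOfPred_tendsto hcont (l := atTop)
    exact hclosed.closure_subset_iff.2 (Set.range_subset_iff.2 hω) (hu y)
  exact fun y ys hys => (hequi y).tendsto_apply_of_tendsto (hpointwise y) hys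

theorem epiConverges_of_tendsto {F : Type*} [TopologicalSpace F] {f : ℕ → F → ℝ} {g : F → ℝ}
    (h : ∀ z zs, Tendsto zs atTop (𝓝 z) → Tendsto (fun n => f n (zs n)) atTop (𝓝 (g z))) :
    EpiConverges (fun n z => (f n z : EReal)) (fun z => (g z : EReal)) := by
  have hE : ∀ z zs, Tendsto zs atTop (𝓝 z) →
      Tendsto (fun n => (f n (zs n) : EReal)) atTop (𝓝 (g z : EReal)) := fun z zs hzs =>
    (continuous_coe_real_ereal.tendsto _).comp (h z zs hzs)
  exact ⟨fun z zs hzs => (hE z zs hzs).liminf_eq.ge,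
    fun z => ⟨fun _ => z, tendsto_const_nhds, (hE z _ tendsto_const_nhds).limsup_eq.le⟩⟩

theorem empirical_mgf_epiconsistent_general
    (d m : ℕ)
    (Xs : Set (Euc d)) (hXc : IsCompact Xs)
    (μ : Measure (Euc d)) (hμP : IsProbabilityMeasure μ) (hμX : ∀ᵐ x ∂μ, x ∈ Xs)
    (C : Euc d →L[ℝ] Euc m)
    (Ω : Type) (mΩ : MeasurableSpace Ω) (P : Measure Ω) (hP : IsProbabilityMeasure P)
    (X : ℕ → Ω → Euc d) (hXmeas : ∀ i, Measurable (X i))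
    (hlaw : ∀ i, Measure.map (X i) P = μ)
    (hindep : iIndepFun X P)
    (hXval : ∀ i ω, X i ω ∈ Xs) :
    P {ω | EpiConverges
        (fun n z => ((EmpMgf X n ω (ContinuousLinearMap.adjoint C z) : ℝ) : EReal))
        (fun z => ((Mgf μ (ContinuousLinearMap.adjoint C z) : ℝ) : EReal))} = 1 := by
  obtain ⟨B, hB, hXsB⟩ := hXc.isBounded.exists_pos_norm_le
  have hae := ae_tendsto_empMgf_of_tendsto hXmeas hlaw hindep hB.le
    (fun i ω => hXsB _ (hXval i ω)) (hμX.mono hXsB)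
  have hepi : ∀ᵐ ω ∂P, EpiConverges
      (fun n z => ((EmpMgf X n ω (ContinuousLinearMap.adjoint C z) : ℝ) : EReal))
      (fun z => ((Mgf μ (ContinuousLinearMap.adjoint C z) : ℝ) : EReal)) := by
    filter_upwards [hae] with ω hω
    exact epiConverges_of_tendsto fun z zs hzs =>
      hω _ _ (((ContinuousLinearMap.adjoint C).continuous.tendsto z).comp hzs)
  exact (measure_congr (ae_eq_univ.2 hepi)).trans measure_univ

/-- a.s. epi-convergence of empirical moment generating functions (composed
with `Cᵀ`). -/
theorem empirical_mgf_epiconsistent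
    (d m : ℕ) (hd : 0 < d) (hm : 0 < m)
    (Xs : Set (Euc d)) (hXc : IsCompact Xs) (hXne : Xs.Nonempty)
    (μ : Measure (Euc d)) (hμP : IsProbabilityMeasure μ) (hμX : ∀ᵐ x ∂μ, x ∈ Xs)
    (C : Euc d →L[ℝ] Euc m)
    (Ω : Type) (mΩ : MeasurableSpace Ω) (P : Measure Ω) (hP : IsProbabilityMeasure P)
    (X : ℕ → Ω → Euc d) (hXmeas : ∀ i, Measurable (X i))
    (hlaw : ∀ i, Measure.map (X i) P = μ)
    (hindep : iIndepFun X P)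
    (hXval : ∀ i ω, X i ω ∈ Xs) :
    P {ω | EpiConverges
        (fun n z => ((EmpMgf X n ω (ContinuousLinearMap.adjoint C z) : ℝ) : EReal))
        (fun z => ((Mgf μ (ContinuousLinearMap.adjoint C z) : ℝ) : EReal))} = 1 :=
  empirical_mgf_epiconsistent_general d m Xs hXc μ hμP hμX C Ω mΩ P hP X hXmeas hlaw hindep hXval
end
end

section
/- For all ρ > ρ₀ and all μ, ν ∈ 𝒫(𝒳), the truncated ρ-Hausdorff epi-distance between the dual objectives satisfies d̂_ρ(φ_μ, φ_ν) ≤ max_{z∈B_ρ} |L_ν(Cᵀz) − L_μ(Cᵀz)|. -/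
open MeasureTheory Filter Topology Metric ProbabilityTheory
open scoped RealInnerProductSpace Pointwise

noncomputable section

variable {d m : ℕ}

/-! The two dual objectives differ only by `L_μ ∘ Cᵀ - L_ν ∘ Cᵀ`, so lifting a point of
`epi φ_μ ∩ B_ρ` vertically by `D_ρ` lands in `epi φ_ν` at distance exactly `D_ρ`, and symmetrically.
`D_ρ` is a genuine maximum (not a junk `sSup`) because `|L_μ(y)| ≤ ‖y‖ |𝒳|` for measures supported
in `𝒳`. -/

theorem infDist_epigraph_le_of_abs_sub_le {E : Type*} [PseudoMetricSpace E] {f g : E → ℝ}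
    {p : E × ℝ} {D : ℝ} (hp : f p.1 ≤ p.2) (hfg : |g p.1 - f p.1| ≤ D) :
    Metric.infDist p {q : E × ℝ | g q.1 ≤ q.2} ≤ D := by
  have hD : 0 ≤ D := (abs_nonneg _).trans hfg
  have hmem : (p.1, p.2 + D) ∈ {q : E × ℝ | g q.1 ≤ q.2} := by
    show g p.1 ≤ p.2 + D
    linarith [le_of_abs_le hfg]
  calc Metric.infDist p {q : E × ℝ | g q.1 ≤ q.2} ≤ dist p (p.1, p.2 + D) :=
        Metric.infDist_le_dist_of_mem hmem
    _ = D := by simp [Prod.dist_eq, abs_of_nonneg hD, hD]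

theorem abs_log_integral_exp_le {Ω : Type*} [MeasurableSpace Ω] {μ : Measure Ω}
    [IsProbabilityMeasure μ] {f : Ω → ℝ} (hf : AEStronglyMeasurable f μ) {c : ℝ}
    (hfc : ∀ᵐ ω ∂μ, |f ω| ≤ c) : |Real.log (∫ ω, Real.exp (f ω) ∂μ)| ≤ c := by
  have hexp : ∀ᵐ ω ∂μ, Real.exp (-c) ≤ Real.exp (f ω) ∧ Real.exp (f ω) ≤ Real.exp c := by
    filter_upwards [hfc] with ω hω
    exact ⟨Real.exp_le_exp.2 (neg_le_of_abs_le hω), Real.exp_le_exp.2 (le_of_abs_le hω)⟩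
  have hint : Integrable (fun ω => Real.exp (f ω)) μ := by
    refine .of_bound (Real.continuous_exp.comp_aestronglyMeasurable hf) (Real.exp c) ?_
    filter_upwards [hexp] with ω hω
    rw [Real.norm_of_nonneg (Real.exp_pos _).le]
    exact hω.2
  have hlo : Real.exp (-c) ≤ ∫ ω, Real.exp (f ω) ∂μ := by
    simpa using integral_mono_ae (integrable_const _) hint (hexp.mono fun _ h => h.1)
  have hhi : ∫ ω, Real.exp (f ω) ∂μ ≤ Real.exp c := by
    simpa using integral_mono_ae hint (integrable_const _) (hexp.mono fun _ h => h.2)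
  have hpos := (Real.exp_pos (-c)).trans_le hlo
  rw [abs_le, Real.le_log_iff_exp_le hpos, Real.log_le_iff_le_exp hpos]
  exact ⟨hlo, hhi⟩

theorem abs_lmgf_le {k : ℕ} {μ : Measure (Euc k)} [IsProbabilityMeasure μ] {R : ℝ}
    (hμ : ∀ᵐ x ∂μ, ‖x‖ ≤ R) (y : Euc k) : |Lmgf μ y| ≤ ‖y‖ * R := by
  refine abs_log_integral_exp_le (continuous_const.inner continuous_id).aestronglyMeasurable ?_
  filter_upwards [hμ] with x hx
  exact (abs_real_inner_le_norm y x).trans (mul_le_mul_of_nonneg_left hx (norm_nonneg y))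

theorem abs_lmgf_adjoint_sub_le_drho {ρ R : ℝ} (C : Euc d →L[ℝ] Euc m)
    {μ ν : Measure (Euc d)} [IsProbabilityMeasure μ] [IsProbabilityMeasure ν]
    (hμ : ∀ᵐ x ∂μ, ‖x‖ ≤ R) (hν : ∀ᵐ x ∂ν, ‖x‖ ≤ R) {z : Euc m} (hz : ‖z‖ ≤ ρ) :
    |Lmgf μ (C.adjoint z) - Lmgf ν (C.adjoint z)| ≤ Drho ρ C ν μ := by
  have hR : 0 ≤ R := by
    obtain ⟨x, hx⟩ := hμ.exists
    exact (norm_nonneg x).trans hx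
  have hbound : ∀ (π : Measure (Euc d)) [IsProbabilityMeasure π], (∀ᵐ x ∂π, ‖x‖ ≤ R) →
      ∀ w ∈ Metric.closedBall (0 : Euc m) ρ, |Lmgf π (C.adjoint w)| ≤ ‖C.adjoint‖ * ρ * R :=
    fun π _ hπ w hw => (abs_lmgf_le hπ _).trans <| mul_le_mul_of_nonneg_right
      (C.adjoint.le_opNorm_of_le (mem_closedBall_zero_iff.1 hw)) hR
  have hbdd : BddAbove ((fun w => |Lmgf μ (C.adjoint w) - Lmgf ν (C.adjoint w)|) ''
      Metric.closedBall (0 : Euc m) ρ) := by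
    refine ⟨‖C.adjoint‖ * ρ * R + ‖C.adjoint‖ * ρ * R, ?_⟩
    rintro _ ⟨w, hw, rfl⟩
    exact (abs_sub _ _).trans (add_le_add (hbound μ hμ w hw) (hbound ν hν w hw))
  exact le_csSup hbdd ⟨z, mem_closedBall_zero_iff.2 hz, rfl⟩

theorem qDual_sub_qDual (α : ℝ) (b : Euc m) (C : Euc d →L[ℝ] Euc m) (μ ν : Measure (Euc d))
    (z : Euc m) :
    QDual α b C μ z - QDual α b C ν z = Lmgf μ (C.adjoint z) - Lmgf ν (C.adjoint z) := by
  simp only [QDual]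
  ring

theorem norm_le_xBound {Xs : Set (Euc d)} (hXc : IsCompact Xs) {x : Euc d} (hx : x ∈ Xs) :
    ‖x‖ ≤ XBound Xs :=
  le_csSup (hXc.image continuous_norm).bddAbove ⟨x, hx, rfl⟩

/-- `Euc m × ℝ` carries the sup norm `max ‖x‖ |t|`, i.e. the paper's `‖·‖_*`. -/
theorem epi_distance_bounded_by_sup_lmgf_general
    (d m : ℕ)
    (Xs : Set (Euc d)) (hXc : IsCompact Xs)
    (C : Euc d →L[ℝ] Euc m) (α : ℝ) (b : Euc m) :
    ∀ ρ : ℝ, rho0 α b C Xs < ρ →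
    ∀ μ ν : Measure (Euc d),
      IsProbabilityMeasure μ → (∀ᵐ x ∂μ, x ∈ Xs) →
      IsProbabilityMeasure ν → (∀ᵐ x ∂ν, x ∈ Xs) →
      ((∀ p : Euc m × ℝ,
          p ∈ {q : Euc m × ℝ | QDual α b C μ q.1 ≤ q.2} ∩ Metric.closedBall 0 ρ →
          Metric.infDist p {q : Euc m × ℝ | QDual α b C ν q.1 ≤ q.2} ≤ Drho ρ C ν μ) ∧
        (∀ p : Euc m × ℝ,
          p ∈ {q : Euc m × ℝ | QDual α b C ν q.1 ≤ q.2} ∩ Metric.closedBall 0 ρ →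
          Metric.infDist p {q : Euc m × ℝ | QDual α b C μ q.1 ≤ q.2} ≤ Drho ρ C ν μ)) := by
  intro ρ _ μ ν _ hμ _ hν
  have hbound : ∀ π : Measure (Euc d), (∀ᵐ x ∂π, x ∈ Xs) → ∀ᵐ x ∂π, ‖x‖ ≤ XBound Xs :=
    fun π hπ => hπ.mono fun _ => norm_le_xBound hXc
  have hclose : ∀ p : Euc m × ℝ, p ∈ Metric.closedBall 0 ρ →
      |QDual α b C μ p.1 - QDual α b C ν p.1| ≤ Drho ρ C ν μ := fun p hp => by
    rw [qDual_sub_qDual]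
    exact abs_lmgf_adjoint_sub_le_drho C (hbound μ hμ) (hbound ν hν)
      ((norm_fst_le p).trans (mem_closedBall_zero_iff.1 hp))
  refine ⟨fun p ⟨hp, hpρ⟩ => ?_, fun p ⟨hp, hpρ⟩ => ?_⟩
  · exact infDist_epigraph_le_of_abs_sub_le hp ((abs_sub_comm _ _).trans_le (hclose p hpρ))
  · exact infDist_epigraph_le_of_abs_sub_le hp (hclose p hpρ)

/-- the truncated `ρ`-Hausdorff epi-distance between dual objectives is
bounded by the sup-norm distance of the LMGFs on `B_ρ`.  Here `Euc m × ℝ` carries the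
norm `‖(x,t)‖ = max (‖x‖, |t|)` (the product sup-norm), and both excesses of the
truncated Hausdorff distance are expressed via `Metric.infDist`. -/
theorem epi_distance_bounded_by_sup_lmgf
    (d m : ℕ) (hd : 0 < d) (hm : 0 < m)
    (Xs : Set (Euc d)) (hXc : IsCompact Xs) (hXne : Xs.Nonempty)
    (C : Euc d →L[ℝ] Euc m) (α : ℝ) (hα : 0 < α) (b : Euc m) :
    ∀ ρ : ℝ, rho0 α b C Xs < ρ →
    ∀ μ ν : Measure (Euc d),
      IsProbabilityMeasure μ → (∀ᵐ x ∂μ, x ∈ Xs) →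
      IsProbabilityMeasure ν → (∀ᵐ x ∂ν, x ∈ Xs) →
      ((∀ p : Euc m × ℝ,
          p ∈ {q : Euc m × ℝ | QDual α b C μ q.1 ≤ q.2} ∩ Metric.closedBall 0 ρ →
          Metric.infDist p {q : Euc m × ℝ | QDual α b C ν q.1 ≤ q.2} ≤ Drho ρ C ν μ) ∧
        (∀ p : Euc m × ℝ,
          p ∈ {q : Euc m × ℝ | QDual α b C ν q.1 ≤ q.2} ∩ Metric.closedBall 0 ρ →
          Metric.infDist p {q : Euc m × ℝ | QDual α b C μ q.1 ≤ q.2} ≤ Drho ρ C ν μ)) :=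
  epi_distance_bounded_by_sup_lmgf_general d m Xs hXc C α b
end
end
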